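/- arXiv:2205.08078 — 2 statements merged into one kernel-verified Lean document; each statement's English description precedes it below -/
import Mathlib

section
/- For each number of heads m, let p_SA(m) be the infimum over weight matrices W_{1j} ∈ ℝ^{d×d} and W_{2j} ∈ ℝ^{d×c} (j = 1,…,m) of Σ_{i=1}^n L(Σ_{j=1}^m (X_i W_{1j} X_iᵀ) X_i W_{2j}, Y_i) + (β/2) Σ_{j=1}^m (‖W_{1j}‖_F² + ‖W_{2j}‖_F²). Then there exists m* ≤ min{d², dc} such that for every m ≥ m*, p_SA(m) equals the optimal value of the convex program: the infimum over Z ∈ ℝ^{d²×dc} of Σ_{i=1}^n L(Σ_{k=1}^d Σ_{ℓ=1}^d G_i[k,ℓ] · X_i Z^{(k,ℓ)}, Y_i) + β‖Z‖_*, where G_i := X_iᵀ X_i. -/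
open Matrix Pointwise Kronecker

noncomputable section

/-- Frobenius norm of a real matrix. -/
def frobNorm {m n : Type*} [Fintype m] [Fintype n] (A : Matrix m n ℝ) : ℝ :=
  Real.sqrt (∑ i, ∑ j, (A i j) ^ 2)

/-- Nuclear norm of a real matrix: the sum of its singular values, i.e. the square
roots of the eigenvalues of `Aᴴ * A`. -/
def nuclearNorm {m n : Type*} [Fintype m] [Fintype n] [DecidableEq n] (A : Matrix m n ℝ) : ℝ :=
  ∑ i, Real.sqrt ((Matrix.isHermitian_conjTranspose_mul_self A).eigenvalues i)

/-- The constrained nuclear norm `‖Z‖_{*,K}`. -/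
def cNuclearNorm {N ι κ : Type*} [Fintype N] [Fintype ι] [Fintype κ] [DecidableEq κ]
    (K : Matrix N ι ℝ) (Z : Matrix ι κ ℝ) : ℝ :=
  sInf {t : ℝ | 0 ≤ t ∧ Z ∈ t • convexHull ℝ
    {M : Matrix ι κ ℝ | ∃ u v, M = Matrix.vecMulVec u v ∧ (∀ r, 0 ≤ (K *ᵥ u) r) ∧
      nuclearNorm M ≤ 1}}

/-- The 0-1 diagonal matrix `diag(1{A u ≥ 0})`. -/
def gateArr {N q : Type*} [Fintype q] [DecidableEq N] (A : Matrix N q ℝ) (u : q → ℝ) :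
    Matrix N N ℝ :=
  Matrix.diagonal fun r => if 0 ≤ (A *ᵥ u) r then (1 : ℝ) else 0

/-- The set of hyperplane arrangements of a matrix `A`. -/
def arrSet {N q : Type*} [Fintype q] [DecidableEq N] (A : Matrix N q ℝ) :
    Set (Matrix N N ℝ) :=
  Set.range (gateArr A)

/-- Entrywise ReLU of a matrix. -/
def reluM {m n : Type*} (A : Matrix m n ℝ) : Matrix m n ℝ :=
  Matrix.of fun i j => max (A i j) 0

/-- Entrywise ReLU of a vector. -/
def reluV {m : Type*} (v : m → ℝ) : m → ℝ := fun i => max (v i) 0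

/-- `circ(X)`: horizontal concatenation of all circulant row-shifts of `X`. -/
def circM {s p : ℕ} (X : Matrix (Fin s) (Fin p) ℝ) : Matrix (Fin s) (Fin s × Fin p) ℝ :=
  Matrix.of fun i q => X (i + q.1) q.2

/-!
Head `j` contributes `X W₁ⱼ XᵀX W₂ⱼ`, the Gram model applied to the rank-one matrix
`vec W₁ⱼ (vec W₂ⱼᵀ)ᵀ`, so the network computes the Gram model of `Z = ∑ⱼ vec W₁ⱼ (vec W₂ⱼᵀ)ᵀ`.
The nuclear norm is the least value of `½ ∑ⱼ (‖uⱼ‖² + ‖vⱼ‖²)` over decompositions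
`Z = ∑ⱼ uⱼ vⱼᵀ`: the inequality is Cauchy–Schwarz followed by Bessel's inequality against the
singular vectors, and the balanced singular value decomposition `uᵢ = √σᵢ pᵢ`, `vᵢ = √σᵢ qᵢ`
attains it with at most `rank Z ≤ min(d², dc)` nonzero terms. So once `m ≥ min(d², dc)`, every
value of either objective is dominated by a value of the other, and the infima agree.
-/

open WithLp (toLp)
open NormedSpace (normalize)
open scoped RealInnerProductSpace

section InnerProductSpace
variable {E : Type*} [NormedAddCommGroup E] [InnerProductSpace ℝ E]

theorem real_inner_normalize_self (x : E) : ⟪normalize x, x⟫ = ‖x‖ := by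
  rcases eq_or_ne x 0 with rfl | hx
  · simp
  rw [NormedSpace.normalize, real_inner_smul_left, real_inner_self_eq_norm_sq]
  field_simp

theorem sum_sq_inner_normalize_le {κ : Type*} [Fintype κ] {w : κ → E}
    (hw : Pairwise fun i j => ⟪w i, w j⟫ = 0) (x : E) :
    ∑ i, ⟪normalize (w i), x⟫ ^ 2 ≤ ‖x‖ ^ 2 := by
  classical
  have hon : Orthonormal ℝ fun i : {i // w i ≠ 0} => normalize (w i) := by
    refine ⟨fun i => NormedSpace.norm_normalize_eq_one_iff.mpr i.2, fun i j hij => ?_⟩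
    simp [NormedSpace.normalize, real_inner_smul_left, real_inner_smul_right,
      hw (Subtype.coe_ne_coe.mpr hij)]
  calc ∑ i, ⟪normalize (w i), x⟫ ^ 2
      = ∑ i : {i // w i ≠ 0}, ⟪normalize (w i), x⟫ ^ 2 :=
        (Fintype.sum_of_injective _ Subtype.val_injective _ _
          (fun i hi => by simp_all) fun _ => rfl).symm
    _ ≤ ‖x‖ ^ 2 := by simpa using hon.sum_inner_products_le x (s := Finset.univ)

end InnerProductSpace

theorem Fintype.exists_sum_comp_eq_of_card_le {κ J P M : Type*} [Fintype κ] [Fintype J] [Zero P]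
    [AddCommMonoid M] (F : P → M) (hF : F 0 = 0) (x : κ → P)
    (h : Nat.card {i // F (x i) ≠ 0} ≤ Fintype.card J) :
    ∃ y : J → P, ∑ j, F (y j) = ∑ i, F (x i) := by
  classical
  rw [Nat.card_eq_fintype_card] at h
  obtain ⟨e⟩ := Function.Embedding.nonempty_of_card_le h
  refine ⟨Function.extend e (fun i => x i) 0, ?_⟩
  calc ∑ j, F (Function.extend e (fun i => x i) 0 j)
      = ∑ i : {i // F (x i) ≠ 0}, F (x i) :=
        (Fintype.sum_of_injective e e.injective _ _
          (fun j hj => by rw [Function.extend_apply' _ _ _ hj, Pi.zero_apply, hF])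
          fun i => by rw [e.injective.extend_apply]).symm
    _ = ∑ i, F (x i) :=
        Fintype.sum_of_injective _ Subtype.val_injective _ _ (fun i hi => by simpa using hi)
          fun _ => rfl

namespace Matrix

variable {ι κ : Type*} [Fintype κ] [DecidableEq κ]

theorem toEuclideanLin_vecMulVec (u : EuclideanSpace ℝ ι) (v x : EuclideanSpace ℝ κ) :
    (vecMulVec ⇑u ⇑v).toEuclideanLin x = ⟪v, x⟫ • u := by
  ext r
  simp [toLpLin_apply, vecMulVec_mulVec, EuclideanSpace.inner_eq_star_dotProduct, dotProduct_comm]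

variable [Fintype ι] (A : Matrix ι κ ℝ)

def rightSingularBasis : OrthonormalBasis κ ℝ (EuclideanSpace ℝ κ) :=
  (isHermitian_conjTranspose_mul_self A).eigenvectorBasis

theorem inner_toEuclideanLin_toEuclideanLin (x y : EuclideanSpace ℝ κ) :
    ⟪A.toEuclideanLin x, A.toEuclideanLin y⟫ = ⟪x, (Aᴴ * A).toEuclideanLin y⟫ := by
  simp only [EuclideanSpace.inner_eq_star_dotProduct, toLpLin_apply, star_trivial,
    conjTranspose_eq_transpose_of_trivial, ← mulVec_mulVec, mulVec_transpose, dotProduct_mulVec]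

theorem inner_toEuclideanLin_rightSingularBasis (i j : κ) :
    ⟪A.toEuclideanLin (A.rightSingularBasis i), A.toEuclideanLin (A.rightSingularBasis j)⟫ =
      if i = j then (isHermitian_conjTranspose_mul_self A).eigenvalues i else 0 := by
  rw [inner_toEuclideanLin_toEuclideanLin, toLpLin_apply, rightSingularBasis,
    (isHermitian_conjTranspose_mul_self A).mulVec_eigenvectorBasis j, WithLp.toLp_smul,
    WithLp.toLp_ofLp, real_inner_smul_right, OrthonormalBasis.inner_eq_ite]
  split_ifs with hij <;> simp [hij]

theorem norm_toEuclideanLin_rightSingularBasis (i : κ) :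
    ‖A.toEuclideanLin (A.rightSingularBasis i)‖ =
      √((isHermitian_conjTranspose_mul_self A).eigenvalues i) := by
  rw [norm_eq_sqrt_real_inner, inner_toEuclideanLin_rightSingularBasis, if_pos rfl]

theorem nuclearNorm_eq_sum_norm :
    nuclearNorm A = ∑ i, ‖A.toEuclideanLin (A.rightSingularBasis i)‖ := by
  simp only [nuclearNorm, norm_toEuclideanLin_rightSingularBasis]

theorem sum_vecMulVec_rightSingularBasis :
    ∑ i, vecMulVec ⇑(A.toEuclideanLin (A.rightSingularBasis i)) ⇑(A.rightSingularBasis i) = A := by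
  refine toEuclideanLin.injective (LinearMap.ext fun x => ?_)
  conv_rhs => rw [← (A.rightSingularBasis).sum_repr' x]
  simp only [map_sum, map_smul, LinearMap.sum_apply, toEuclideanLin_vecMulVec]

theorem card_toEuclideanLin_rightSingularBasis_ne_zero_le :
    Nat.card {i // A.toEuclideanLin (A.rightSingularBasis i) ≠ 0} ≤ Fintype.card ι := by
  have hind := linearIndependent_of_ne_zero_of_inner_eq_zero (𝕜 := ℝ)
    (v := fun i : {i // A.toEuclideanLin (A.rightSingularBasis i) ≠ 0} =>
      A.toEuclideanLin (A.rightSingularBasis i)) (fun i => i.2)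
    (fun i j hij => by
      simp only
      rw [inner_toEuclideanLin_rightSingularBasis, if_neg (Subtype.coe_ne_coe.mpr hij)])
  simpa using hind.fintype_card_le_finrank

theorem nuclearNorm_sum_vecMulVec_le {J : Type*} [Fintype J] (u : J → EuclideanSpace ℝ ι)
    (v : J → EuclideanSpace ℝ κ) :
    nuclearNorm (∑ j, vecMulVec ⇑(u j) ⇑(v j)) ≤ ∑ j, ‖u j‖ * ‖v j‖ := by
  set A := ∑ j, vecMulVec ⇑(u j) ⇑(v j)
  set b := A.rightSingularBasis
  set w := fun i => A.toEuclideanLin (b i)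
  have hw : Pairwise fun i j => ⟪w i, w j⟫ = 0 := fun i j hij => by
    simp [w, b, inner_toEuclideanLin_rightSingularBasis, hij]
  have hnorm (i : κ) : ‖w i‖ = ∑ j, ⟪normalize (w i), u j⟫ * ⟪b i, v j⟫ := by
    rw [← real_inner_normalize_self]
    simp only [w, A, map_sum, LinearMap.sum_apply, toEuclideanLin_vecMulVec, inner_sum,
      real_inner_smul_right, real_inner_comm (b i), mul_comm]
  calc nuclearNorm A
      = ∑ i, ∑ j, ⟪normalize (w i), u j⟫ * ⟪b i, v j⟫ := by
        rw [nuclearNorm_eq_sum_norm]; exact Finset.sum_congr rfl fun i _ => hnorm i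
    _ = ∑ j, ∑ i, ⟪normalize (w i), u j⟫ * ⟪b i, v j⟫ := Finset.sum_comm
    _ ≤ ∑ j, √(∑ i, ⟪normalize (w i), u j⟫ ^ 2) * √(∑ i, ⟪b i, v j⟫ ^ 2) :=
        Finset.sum_le_sum fun j _ => Real.sum_mul_le_sqrt_mul_sqrt _ _ _
    _ ≤ ∑ j, ‖u j‖ * ‖v j‖ := by
        gcongr with j
        · exact Real.sqrt_le_sqrt (sum_sq_inner_normalize_le hw _) |>.trans_eq
            (Real.sqrt_sq (norm_nonneg _))
        · rw [b.sum_sq_inner_right, Real.sqrt_sq (norm_nonneg _)]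

theorem two_mul_nuclearNorm_sum_vecMulVec_le {J : Type*} [Fintype J]
    (u : J → EuclideanSpace ℝ ι) (v : J → EuclideanSpace ℝ κ) :
    2 * nuclearNorm (∑ j, vecMulVec ⇑(u j) ⇑(v j)) ≤ ∑ j, (‖u j‖ ^ 2 + ‖v j‖ ^ 2) := by
  calc 2 * nuclearNorm (∑ j, vecMulVec ⇑(u j) ⇑(v j)) ≤ ∑ j, 2 * (‖u j‖ * ‖v j‖) := by
        rw [← Finset.mul_sum]; gcongr; exact nuclearNorm_sum_vecMulVec_le u v
    _ ≤ ∑ j, (‖u j‖ ^ 2 + ‖v j‖ ^ 2) := by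
        gcongr with j; rw [← mul_assoc]; exact two_mul_le_add_sq _ _

theorem exists_sum_vecMulVec_eq_and_sum_sq_norm_eq {J : Type*} [Fintype J]
    (hJ : min (Fintype.card ι) (Fintype.card κ) ≤ Fintype.card J) :
    ∃ (u : J → EuclideanSpace ℝ ι) (v : J → EuclideanSpace ℝ κ),
      ∑ j, vecMulVec ⇑(u j) ⇑(v j) = A ∧ ∑ j, (‖u j‖ ^ 2 + ‖v j‖ ^ 2) = 2 * nuclearNorm A := by
  set b := A.rightSingularBasis
  set w := fun i => A.toEuclideanLin (b i)
  let F : EuclideanSpace ℝ ι × EuclideanSpace ℝ κ → Matrix ι κ ℝ × ℝ :=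
    fun p => (vecMulVec ⇑p.1 ⇑p.2, ‖p.1‖ ^ 2 + ‖p.2‖ ^ 2)
  -- balancing `w i` against the unit vector `b i` equalises the two squared norms
  let x i := ((√‖w i‖)⁻¹ • w i, √‖w i‖ • b i)
  have hFx (i : κ) : F (x i) = (vecMulVec ⇑(w i) ⇑(b i), 2 * ‖w i‖) := by
    rcases eq_or_ne (w i) 0 with hwi | hwi
    · simp [F, x, hwi]
    have hs : 0 < √‖w i‖ := Real.sqrt_pos.mpr (norm_pos_iff.mpr hwi)
    simp only [F, x, WithLp.ofLp_smul, smul_vecMulVec, vecMulVec_smul, smul_smul, norm_smul,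
      b.norm_eq_one, Real.norm_eq_abs, abs_of_pos hs, abs_inv, mul_inv_cancel₀ hs.ne', one_smul,
      mul_one, mul_pow, inv_pow, Real.sq_sqrt (norm_nonneg _)]
    congr 1
    field_simp
    ring
  have hsupp (i : κ) (hi : F (x i) ≠ 0) : w i ≠ 0 := fun hwi => hi (by simp [hFx, hwi])
  have hcard : Nat.card {i // F (x i) ≠ 0} ≤ Fintype.card J :=
    calc Nat.card {i // F (x i) ≠ 0}
        ≤ min (Fintype.card ι) (Fintype.card κ) := le_min
          ((Nat.card_le_card_of_injective _ (Subtype.impEmbedding _ _ hsupp).injective).trans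
            (card_toEuclideanLin_rightSingularBasis_ne_zero_le A))
          ((Finite.card_subtype_le _).trans_eq Nat.card_eq_fintype_card)
      _ ≤ Fintype.card J := hJ
  obtain ⟨y, hy⟩ := Fintype.exists_sum_comp_eq_of_card_le F (by simp [F]) x hcard
  refine ⟨fun j => (y j).1, fun j => (y j).2, ?_, ?_⟩
  · conv_rhs => rw [← A.sum_vecMulVec_rightSingularBasis]
    simpa only [F, hFx, Prod.fst_sum] using congrArg Prod.fst hy
  · rw [nuclearNorm_eq_sum_norm, Finset.mul_sum]
    simpa only [F, hFx, Prod.snd_sum] using congrArg Prod.snd hy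

end Matrix

theorem frobNorm_eq_norm_vec {m n : Type*} [Fintype m] [Fintype n] (A : Matrix m n ℝ) :
    frobNorm A = ‖toLp 2 (vec A)‖ := by
  simp only [frobNorm, EuclideanSpace.norm_eq, Real.norm_eq_abs, sq_abs, vec,
    Fintype.sum_prod_type]
  rw [Finset.sum_comm]

theorem frobNorm_transpose {m n : Type*} [Fintype m] [Fintype n] (A : Matrix m n ℝ) :
    frobNorm Aᵀ = frobNorm A := by
  simp only [frobNorm, transpose_apply]
  rw [Finset.sum_comm]

theorem Matrix.sum_smul_vecMulVec_eq_mul_mul {m n p q : Type*} [Fintype n] [Fintype p]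
    (A : Matrix m n ℝ) (G : Matrix n p ℝ) (B : Matrix p q ℝ) :
    ∑ k, ∑ l, G k l • vecMulVec (Aᵀ k) (B l) = A * G * B := by
  ext a c
  simp only [sum_apply, smul_apply, mul_apply, vecMulVec_apply, transpose_apply, smul_eq_mul,
    Finset.sum_mul]
  rw [Finset.sum_comm]
  exact Finset.sum_congr rfl fun _ _ => Finset.sum_congr rfl fun _ _ => by ring

section AttentionHeads
variable {S D C J : Type*} [Fintype S] [Fintype D] [Fintype J]

/-- The linear model of the convex program, `Z ↦ ∑ₖₗ Gₖₗ • X Z⁽ᵏˡ⁾` with `G = XᵀX`. -/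
def gramModel (X : Matrix S D ℝ) : Matrix (D × D) (D × C) ℝ →ₗ[ℝ] Matrix S C ℝ where
  toFun Z := ∑ k, ∑ l, (Xᵀ * X) k l • (X * of fun a p => Z (k, a) (l, p))
  map_add' Z Z' := by
    simp only [← Finset.sum_add_distrib, ← smul_add, ← Matrix.mul_add]
    rfl
  map_smul' r Z := by
    ext i p
    simp [Matrix.sum_apply, mul_apply, Finset.mul_sum, mul_left_comm]

theorem gramModel_apply (X : Matrix S D ℝ) (Z : Matrix (D × D) (D × C) ℝ) :
    gramModel X Z = ∑ k, ∑ l, (Xᵀ * X) k l • (X * of fun a p => Z (k, a) (l, p)) :=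
  rfl

theorem gramModel_vecMulVec_vec (X : Matrix S D ℝ) (W₁ : Matrix D D ℝ) (W₂ : Matrix D C ℝ) :
    gramModel X (vecMulVec (vec W₁) (vec W₂ᵀ)) = X * W₁ * Xᵀ * X * W₂ := by
  rw [show X * W₁ * Xᵀ * X * W₂ = X * (W₁ * (Xᵀ * X) * W₂) by simp only [Matrix.mul_assoc],
    ← sum_smul_vecMulVec_eq_mul_mul]
  simp only [gramModel_apply, Matrix.mul_sum, Matrix.mul_smul]
  rfl

theorem gramModel_sum_vecMulVec_vec (X : Matrix S D ℝ) (W₁ : J → Matrix D D ℝ)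
    (W₂ : J → Matrix D C ℝ) :
    gramModel X (∑ j, vecMulVec (vec (W₁ j)) (vec (W₂ j)ᵀ)) = ∑ j, X * W₁ j * Xᵀ * X * W₂ j := by
  simp only [map_sum, gramModel_vecMulVec_vec]

variable [Fintype C] [DecidableEq D] [DecidableEq C]

theorem two_mul_nuclearNorm_sum_vecMulVec_vec_le (W₁ : J → Matrix D D ℝ)
    (W₂ : J → Matrix D C ℝ) :
    2 * nuclearNorm (∑ j, vecMulVec (vec (W₁ j)) (vec (W₂ j)ᵀ)) ≤
      ∑ j, (frobNorm (W₁ j) ^ 2 + frobNorm (W₂ j) ^ 2) := by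
  simpa only [← frobNorm_eq_norm_vec, frobNorm_transpose] using
    two_mul_nuclearNorm_sum_vecMulVec_le (fun j => toLp 2 (vec (W₁ j)))
      (fun j => toLp 2 (vec (W₂ j)ᵀ))

theorem exists_sum_vecMulVec_vec_eq_and_sum_sq_frobNorm_eq (Z : Matrix (D × D) (D × C) ℝ)
    (hJ : min (Fintype.card D * Fintype.card D) (Fintype.card D * Fintype.card C) ≤
      Fintype.card J) :
    ∃ (W₁ : J → Matrix D D ℝ) (W₂ : J → Matrix D C ℝ),
      ∑ j, vecMulVec (vec (W₁ j)) (vec (W₂ j)ᵀ) = Z ∧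
        ∑ j, (frobNorm (W₁ j) ^ 2 + frobNorm (W₂ j) ^ 2) = 2 * nuclearNorm Z := by
  obtain ⟨u, v, hZ, hnorm⟩ := Z.exists_sum_vecMulVec_eq_and_sum_sq_norm_eq (by simpa using hJ)
  refine ⟨fun j => of fun a k => u j (k, a), fun j => of fun l p => v j (l, p), hZ, ?_⟩
  rw [← hnorm]
  congr! 3 with j
  · exact frobNorm_eq_norm_vec _
  · rw [← frobNorm_transpose]; exact frobNorm_eq_norm_vec _

end AttentionHeads

theorem linear_self_attention_convex_dual_general
    (n s d c : ℕ)
    (β : ℝ) (hβ : 0 < β)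
    (X : Fin n → Matrix (Fin s) (Fin d) ℝ) (Y : Fin n → Matrix (Fin s) (Fin c) ℝ)
    (L : Matrix (Fin s) (Fin c) ℝ → Matrix (Fin s) (Fin c) ℝ → ℝ) :
    ∃ mstar : ℕ, mstar ≤ min (d * d) (d * c) ∧ ∀ m : ℕ, mstar ≤ m →
      (⨅ W : (Fin m → Matrix (Fin d) (Fin d) ℝ) × (Fin m → Matrix (Fin d) (Fin c) ℝ),
        (∑ i, L (∑ j, X i * W.1 j * (X i)ᵀ * (X i) * W.2 j) (Y i)) +
          (β / 2) * ∑ j, (frobNorm (W.1 j) ^ 2 + frobNorm (W.2 j) ^ 2))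
      =
      (⨅ Z : Matrix (Fin d × Fin d) (Fin d × Fin c) ℝ,
        (∑ i, L (∑ k : Fin d, ∑ l : Fin d,
            ((X i)ᵀ * X i) k l • (X i * Matrix.of fun a p => Z (k, a) (l, p))) (Y i)) +
          β * nuclearNorm Z) := by
  refine ⟨min (d * d) (d * c), le_rfl, fun m hm => ?_⟩
  simp only [← gramModel_apply, ← gramModel_sum_vecMulVec_vec]
  apply csInf_eq_csInf_of_forall_exists_le
  · rintro _ ⟨W, rfl⟩
    refine ⟨_, ⟨_, rfl⟩, add_le_add le_rfl ?_⟩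
    linarith [mul_le_mul_of_nonneg_left (two_mul_nuclearNorm_sum_vecMulVec_vec_le W.1 W.2) hβ.le]
  · rintro _ ⟨Z, rfl⟩
    obtain ⟨W₁, W₂, rfl, hW⟩ :=
      exists_sum_vecMulVec_vec_eq_and_sum_sq_frobNorm_eq (J := Fin m) Z (by simpa using hm)
    refine ⟨_, ⟨(W₁, W₂), rfl⟩, le_of_eq ?_⟩
    dsimp only
    rw [hW]
    ring

/-- **Theorem 1 (linear-activation multi-head self-attention).**
The non-convex training problem is equivalent to a convex program with a
Gram-matrix-weighted linear model and nuclear-norm regularization, for any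
number of heads `m ≥ m*` with `m* ≤ min {d², dc}`. -/
theorem linear_self_attention_convex_dual
    (n s d c : ℕ) (hn : 0 < n) (hs : 0 < s) (hd : 0 < d) (hc : 0 < c)
    (β : ℝ) (hβ : 0 < β)
    (X : Fin n → Matrix (Fin s) (Fin d) ℝ) (Y : Fin n → Matrix (Fin s) (Fin c) ℝ)
    (L : Matrix (Fin s) (Fin c) ℝ → Matrix (Fin s) (Fin c) ℝ → ℝ)
    (hconv : ∀ Yi, ConvexOn ℝ Set.univ fun R => L R Yi)
    (hlsc : ∀ Yi, LowerSemicontinuous fun R => L R Yi) :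
    ∃ mstar : ℕ, mstar ≤ min (d * d) (d * c) ∧ ∀ m : ℕ, mstar ≤ m →
      (⨅ W : (Fin m → Matrix (Fin d) (Fin d) ℝ) × (Fin m → Matrix (Fin d) (Fin c) ℝ),
        (∑ i, L (∑ j, X i * W.1 j * (X i)ᵀ * (X i) * W.2 j) (Y i)) +
          (β / 2) * ∑ j, (frobNorm (W.1 j) ^ 2 + frobNorm (W.2 j) ^ 2))
      =
      (⨅ Z : Matrix (Fin d × Fin d) (Fin d × Fin c) ℝ,
        (∑ i, L (∑ k : Fin d, ∑ l : Fin d,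
            ((X i)ᵀ * X i) k l • (X i * Matrix.of fun a p => Z (k, a) (l, p))) (Y i)) +
          β * nuclearNorm Z) :=
  linear_self_attention_convex_dual_general n s d c β hβ X Y L
end
end

section
/- For each m, let p_FN(m) be the infimum over vectors w_{1j} ∈ ℝ^{sd} and w_{2j} ∈ ℝ^c (j = 1,…,m) of Σ_{i=1}^n L(Σ_{j=1}^m (circ(X_i) w_{1j}) w_{2j}ᵀ, Y_i) + (β/2) Σ_{j=1}^m (‖w_{1j}‖₂² + ‖w_{2j}‖₂²). Then there exists m* ≤ min{sd, c} such that for every m ≥ m*, p_FN(m) equals the infimum over Z ∈ ℝ^{sd×c} of Σ_{i=1}^n L(circ(X_i) Z, Y_i) + β‖Z‖_*. -/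
/-! With linear activations the network depends on its weights only through
`Z = ∑ⱼ w₁ⱼ w₂ⱼᵀ`, and `∑ⱼ L(circ(Xᵢ) w₁ⱼ w₂ⱼᵀ, Yᵢ) = L(circ(Xᵢ) Z, Yᵢ)`. Pairing the singular
vectors of `Z` with the rank-one terms, Cauchy–Schwarz and Bessel give
`‖Z‖_* ≤ ∑ⱼ ‖w₁ⱼ‖ ‖w₂ⱼ‖ ≤ ½ ∑ⱼ (‖w₁ⱼ‖² + ‖w₂ⱼ‖²)`. Conversely, splitting each singular value
evenly, `Z = ∑ₖ (√σₖ pₖ)(√σₖ qₖ)ᵀ` attains this bound with `c` neurons, or with `sd` neurons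
after factorising `Zᵀ` (whose nuclear norm is no larger). Hence for `m ≥ min(sd, c)` each
objective value of one problem is dominated by one of the other, and the infima agree. -/

open Matrix Pointwise Kronecker

noncomputable section

open Function Finset

theorem dotProduct_self_eq_sum_sq {ι R : Type*} [Fintype ι] [Semiring R] (v : ι → R) :
    v ⬝ᵥ v = ∑ i, v i ^ 2 := by
  simp [dotProduct, sq]

theorem mul_sum_vecMulVec {ι κ N γ R : Type*} [Fintype ι] [Fintype γ] [Semiring R]
    (C : Matrix N ι R) (u : γ → ι → R) (v : γ → κ → R) :
    C * ∑ j, vecMulVec (u j) (v j) = ∑ j, vecMulVec (C *ᵥ u j) (v j) := by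
  simp [Matrix.mul_sum, mul_vecMulVec]

theorem Function.Injective.sum_extend_zero₂ {γ δ α β M : Type*} [Fintype γ] [Fintype δ]
    [Zero α] [Zero β] [AddCommMonoid M] {e : γ → δ} (he : Injective e) (u : γ → α) (v : γ → β)
    {f : α → β → M} (hf : f 0 0 = 0) :
    ∑ k, f (extend e u 0 k) (extend e v 0 k) = ∑ j, f (u j) (v j) := by
  refine (Fintype.sum_of_injective e he _ _ (fun k hk => ?_) fun j => ?_).symm
  · rw [extend_apply' _ _ _ hk, extend_apply' _ _ _ hk, Pi.zero_apply, Pi.zero_apply, hf]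
  · rw [he.extend_apply, he.extend_apply]

theorem Real.iInf_eq_iInf_of_forall_exists_le {α β : Type*} [Nonempty α] [Nonempty β]
    {f : α → ℝ} {g : β → ℝ} (hfg : ∀ a, ∃ b, g b ≤ f a) (hgf : ∀ b, ∃ a, f a ≤ g b) :
    ⨅ a, f a = ⨅ b, g b := by
  have hbdd : BddBelow (Set.range f) ↔ BddBelow (Set.range g) := by
    constructor <;> rintro ⟨C, hC⟩ <;> refine ⟨C, Set.forall_mem_range.2 fun x => ?_⟩
    · obtain ⟨a, ha⟩ := hgf x
      exact (hC ⟨a, rfl⟩).trans ha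
    · obtain ⟨b, hb⟩ := hfg x
      exact (hC ⟨b, rfl⟩).trans hb
  by_cases hf : BddBelow (Set.range f)
  · exact le_antisymm (ciInf_mono_of_forall_exists hf hgf)
      (ciInf_mono_of_forall_exists (hbdd.1 hf) hfg)
  · have hg : ¬BddBelow (Set.range g) := hbdd.not.1 hf
    rw [Real.iInf_of_not_bddBelow hf, Real.iInf_of_not_bddBelow hg]

theorem sum_sq_dotProduct_le_of_pairwise_orthogonal {γ ι : Type*} [Fintype γ] [Fintype ι]
    (p : γ → ι → ℝ) (horth : Pairwise fun i j => p i ⬝ᵥ p j = 0) (hnorm : ∀ i, p i ⬝ᵥ p i ≤ 1)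
    (x : ι → ℝ) : ∑ i, (p i ⬝ᵥ x) ^ 2 ≤ x ⬝ᵥ x := by
  set w := ∑ i, (p i ⬝ᵥ x) • p i
  have hxw : x ⬝ᵥ w = ∑ i, (p i ⬝ᵥ x) ^ 2 := by
    simp only [w, dotProduct_comm x, sum_dotProduct, smul_dotProduct, smul_eq_mul, sq]
  have hww : w ⬝ᵥ w = ∑ i, (p i ⬝ᵥ x) ^ 2 * (p i ⬝ᵥ p i) := by
    simp only [w, sum_dotProduct, dotProduct_sum, smul_dotProduct, dotProduct_smul]
    refine sum_congr rfl fun i _ => ?_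
    rw [sum_eq_single i (fun j _ hji => by rw [horth hji]; simp) (by simp)]
    simp only [smul_eq_mul]
    ring
  have hww_le : w ⬝ᵥ w ≤ ∑ i, (p i ⬝ᵥ x) ^ 2 :=
    hww ▸ sum_le_sum fun i _ => mul_le_of_le_one_right (sq_nonneg _) (hnorm i)
  have hpos : 0 ≤ (x - w) ⬝ᵥ (x - w) := by
    simpa using dotProduct_self_star_nonneg (x - w)
  rw [sub_dotProduct, dotProduct_sub, dotProduct_sub, dotProduct_comm w x, hxw] at hpos
  linarith

section NuclearNorm

variable {ι κ : Type*} [Fintype ι] [Fintype κ] [DecidableEq κ] (A : Matrix ι κ ℝ)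

def rightSingularVector (i : κ) : κ → ℝ :=
  (isHermitian_conjTranspose_mul_self A).eigenvectorBasis i

def singularValue (i : κ) : ℝ :=
  √((isHermitian_conjTranspose_mul_self A).eigenvalues i)

local notation "q" => rightSingularVector A
local notation "σ" => singularValue A

theorem nuclearNorm_eq_sum_singularValue : nuclearNorm A = ∑ i, σ i := rfl

theorem singularValue_nonneg (i : κ) : 0 ≤ σ i := Real.sqrt_nonneg _

theorem sq_singularValue (i : κ) :
    σ i ^ 2 = (isHermitian_conjTranspose_mul_self A).eigenvalues i :=
  Real.sq_sqrt (eigenvalues_conjTranspose_mul_self_nonneg A i)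

theorem rightSingularVector_dotProduct (i j : κ) :
    q i ⬝ᵥ q j = if i = j then 1 else 0 := by
  rw [← orthonormal_iff_ite.1 (isHermitian_conjTranspose_mul_self A).eigenvectorBasis.orthonormal,
    EuclideanSpace.inner_eq_star_dotProduct, dotProduct_comm]
  rfl

theorem sum_vecMulVec_rightSingularVector : ∑ i, vecMulVec (q i) (q i) = 1 := by
  have hU := Unitary.coe_mul_star_self (isHermitian_conjTranspose_mul_self A).eigenvectorUnitary
  ext a b
  rw [← hU]
  simp [Matrix.sum_apply, vecMulVec_apply, Matrix.mul_apply, rightSingularVector]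

theorem sum_vecMulVec_mulVec_rightSingularVector : ∑ i, vecMulVec (A *ᵥ q i) (q i) = A := by
  rw [← mul_sum_vecMulVec, sum_vecMulVec_rightSingularVector, Matrix.mul_one]

theorem mulVec_rightSingularVector_dotProduct (i j : κ) :
    (A *ᵥ q i) ⬝ᵥ (A *ᵥ q j) = if i = j then σ i ^ 2 else 0 := by
  have hB := isHermitian_conjTranspose_mul_self A
  have heig : (Aᴴ * A) *ᵥ q j = hB.eigenvalues j • q j := hB.mulVec_eigenvectorBasis j
  calc (A *ᵥ q i) ⬝ᵥ (A *ᵥ q j) = q i ⬝ᵥ (Aᴴ * A) *ᵥ q j := by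
        rw [← mulVec_mulVec, dotProduct_mulVec (q i), conjTranspose_eq_transpose_of_trivial,
          vecMul_transpose]
    _ = if i = j then σ i ^ 2 else 0 := by
        rw [heig, dotProduct_smul, rightSingularVector_dotProduct]
        split_ifs with h
        · rw [h, sq_singularValue, smul_eq_mul, mul_one]
        · rw [smul_zero]

theorem mulVec_rightSingularVector_eq_zero {i : κ} (h : σ i = 0) : A *ᵥ q i = 0 :=
  dotProduct_self_eq_zero.1 <| by
    rw [mulVec_rightSingularVector_dotProduct, if_pos rfl, h, sq, mul_zero]

theorem nuclearNorm_le_sum_sqrt_mul_sqrt {γ : Type*} [Fintype γ] (u : γ → ι → ℝ)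
    (v : γ → κ → ℝ) (hA : ∑ j, vecMulVec (u j) (v j) = A) :
    nuclearNorm A ≤ ∑ j, √(u j ⬝ᵥ u j) * √(v j ⬝ᵥ v j) := by
  -- left singular vectors, with `p i = 0` when `σ i = 0` since `0⁻¹ = 0`
  set p : κ → ι → ℝ := fun i => (σ i)⁻¹ • (A *ᵥ q i)
  have hp : ∀ i j, p i ⬝ᵥ p j = (σ i)⁻¹ * (σ j)⁻¹ * if i = j then σ i ^ 2 else 0 := by
    intro i j
    simp only [p, smul_dotProduct, dotProduct_smul, mulVec_rightSingularVector_dotProduct,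
      smul_eq_mul]
    ring
  have hp_orth : Pairwise fun i j => p i ⬝ᵥ p j = 0 := fun i j hij =>
    (hp i j).trans <| by rw [if_neg hij, mul_zero]
  have hp_norm : ∀ i, p i ⬝ᵥ p i ≤ 1 := fun i => by
    rw [hp, if_pos rfl, ← mul_inv, ← sq, inv_mul_eq_div]
    exact div_self_le_one _
  have hq_orth : Pairwise fun i j => q i ⬝ᵥ q j = 0 := fun i j hij =>
    (rightSingularVector_dotProduct A i j).trans (if_neg hij)
  have hq_norm : ∀ i, q i ⬝ᵥ q i ≤ 1 := fun i => by
    rw [rightSingularVector_dotProduct, if_pos rfl]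
  have hAq : ∀ i, A *ᵥ q i = ∑ j, (v j ⬝ᵥ q i) • u j := fun i => by
    simp [← hA, sum_mulVec, vecMulVec_mulVec]
  calc nuclearNorm A = ∑ i, p i ⬝ᵥ (A *ᵥ q i) := by
        rw [nuclearNorm_eq_sum_singularValue]
        refine sum_congr rfl fun i _ => ?_
        rw [smul_dotProduct, mulVec_rightSingularVector_dotProduct, if_pos rfl, smul_eq_mul, sq,
          ← mul_assoc, inv_mul_mul_self]
    _ = ∑ j, ∑ i, (p i ⬝ᵥ u j) * (q i ⬝ᵥ v j) := by
        rw [sum_comm]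
        simp only [hAq, dotProduct_sum, dotProduct_smul, smul_eq_mul, dotProduct_comm (v _),
          mul_comm]
    _ ≤ ∑ j, √(∑ i, (p i ⬝ᵥ u j) ^ 2) * √(∑ i, (q i ⬝ᵥ v j) ^ 2) :=
        sum_le_sum fun j _ => Real.sum_mul_le_sqrt_mul_sqrt _ _ _
    _ ≤ ∑ j, √(u j ⬝ᵥ u j) * √(v j ⬝ᵥ v j) := by
        gcongr with j
        · exact sum_sq_dotProduct_le_of_pairwise_orthogonal p hp_orth hp_norm (u j)
        · exact sum_sq_dotProduct_le_of_pairwise_orthogonal q hq_orth hq_norm (v j)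

theorem exists_sum_vecMulVec_eq_and_dotProduct_self_eq_singularValue :
    ∃ (u : κ → ι → ℝ) (v : κ → κ → ℝ), ∑ i, vecMulVec (u i) (v i) = A ∧
      ∀ i, u i ⬝ᵥ u i = σ i ∧ v i ⬝ᵥ v i = σ i := by
  have hσ (i : κ) : √(σ i) * √(σ i) = σ i := Real.mul_self_sqrt (singularValue_nonneg A i)
  refine ⟨fun i => (√(σ i))⁻¹ • (A *ᵥ q i), fun i => √(σ i) • q i, ?_, fun i => ⟨?_, ?_⟩⟩
  · conv_rhs => rw [← sum_vecMulVec_mulVec_rightSingularVector A]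
    refine sum_congr rfl fun i _ => ?_
    rw [smul_vecMulVec, vecMulVec_smul, smul_smul]
    rcases eq_or_ne (σ i) 0 with h | h
    · simp [mulVec_rightSingularVector_eq_zero A h]
    · rw [inv_mul_cancel₀ (Real.sqrt_ne_zero'.2 ((singularValue_nonneg A i).lt_of_ne' h)),
        one_smul]
  · rw [smul_dotProduct, dotProduct_smul, mulVec_rightSingularVector_dotProduct, if_pos rfl,
      smul_eq_mul, smul_eq_mul, ← mul_assoc, ← mul_inv, hσ, sq, ← mul_assoc, inv_mul_mul_self]
  · rw [smul_dotProduct, dotProduct_smul, rightSingularVector_dotProduct, if_pos rfl,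
      smul_eq_mul, smul_eq_mul, mul_one, hσ]

theorem two_mul_nuclearNorm_le_sum_dotProduct_self {γ : Type*} [Fintype γ] (u : γ → ι → ℝ)
    (v : γ → κ → ℝ) (hA : ∑ j, vecMulVec (u j) (v j) = A) :
    2 * nuclearNorm A ≤ ∑ j, (u j ⬝ᵥ u j + v j ⬝ᵥ v j) := by
  calc 2 * nuclearNorm A ≤ ∑ j, 2 * (√(u j ⬝ᵥ u j) * √(v j ⬝ᵥ v j)) := by
        rw [← mul_sum]
        gcongr
        exact nuclearNorm_le_sum_sqrt_mul_sqrt A u v hA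
    _ ≤ ∑ j, (u j ⬝ᵥ u j + v j ⬝ᵥ v j) := by
        gcongr with j
        have hu : 0 ≤ u j ⬝ᵥ u j := by simpa using dotProduct_self_star_nonneg (u j)
        have hv : 0 ≤ v j ⬝ᵥ v j := by simpa using dotProduct_self_star_nonneg (v j)
        nlinarith [sq_nonneg (√(u j ⬝ᵥ u j) - √(v j ⬝ᵥ v j)), Real.sq_sqrt hu, Real.sq_sqrt hv]

theorem exists_sum_vecMulVec_eq_of_card_le {δ : Type*} [Fintype δ]
    (h : Fintype.card κ ≤ Fintype.card δ) :
    ∃ (u : δ → ι → ℝ) (v : δ → κ → ℝ), ∑ k, vecMulVec (u k) (v k) = A ∧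
      ∑ k, (u k ⬝ᵥ u k + v k ⬝ᵥ v k) = 2 * nuclearNorm A := by
  obtain ⟨e⟩ := Function.Embedding.nonempty_of_card_le h
  obtain ⟨u, v, hA, huv⟩ := exists_sum_vecMulVec_eq_and_dotProduct_self_eq_singularValue A
  refine ⟨extend e u 0, extend e v 0, ?_, ?_⟩
  · rw [e.injective.sum_extend_zero₂ u v (f := vecMulVec) (zero_vecMulVec 0), hA]
  · rw [e.injective.sum_extend_zero₂ u v (f := fun x y => x ⬝ᵥ x + y ⬝ᵥ y) (by simp),
      nuclearNorm_eq_sum_singularValue, mul_sum]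
    simp [huv, two_mul]

theorem nuclearNorm_transpose_le [DecidableEq ι] : nuclearNorm Aᵀ ≤ nuclearNorm A := by
  obtain ⟨u, v, hA, huv⟩ := exists_sum_vecMulVec_eq_and_dotProduct_self_eq_singularValue A
  calc nuclearNorm Aᵀ ≤ ∑ i, √(v i ⬝ᵥ v i) * √(u i ⬝ᵥ u i) :=
        nuclearNorm_le_sum_sqrt_mul_sqrt Aᵀ v u (by simp [← hA, transpose_sum])
    _ = nuclearNorm A := by
        simp [huv, Real.mul_self_sqrt (singularValue_nonneg A _), nuclearNorm_eq_sum_singularValue]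

theorem exists_sum_vecMulVec_eq_of_min_card_le [DecidableEq ι] {δ : Type*} [Fintype δ]
    (h : min (Fintype.card ι) (Fintype.card κ) ≤ Fintype.card δ) :
    ∃ (u : δ → ι → ℝ) (v : δ → κ → ℝ), ∑ k, vecMulVec (u k) (v k) = A ∧
      ∑ k, (u k ⬝ᵥ u k + v k ⬝ᵥ v k) ≤ 2 * nuclearNorm A := by
  rcases min_le_iff.1 h with hι | hκ
  · obtain ⟨v, u, hA, huv⟩ := exists_sum_vecMulVec_eq_of_card_le Aᵀ hι
    refine ⟨u, v, by simpa [transpose_sum] using congrArg transpose hA, ?_⟩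
    calc ∑ k, (u k ⬝ᵥ u k + v k ⬝ᵥ v k) = 2 * nuclearNorm Aᵀ := by simp only [← huv, add_comm]
      _ ≤ 2 * nuclearNorm A := by gcongr; exact nuclearNorm_transpose_le A
  · obtain ⟨u, v, hA, huv⟩ := exists_sum_vecMulVec_eq_of_card_le A hκ
    exact ⟨u, v, hA, huv.le⟩

end NuclearNorm

theorem linear_fno_convex_dual_general
    (n s d c : ℕ) (β : ℝ) (hβ : 0 < β)
    (X : Fin n → Matrix (Fin s) (Fin d) ℝ) (Y : Fin n → Matrix (Fin s) (Fin c) ℝ)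
    (L : Matrix (Fin s) (Fin c) ℝ → Matrix (Fin s) (Fin c) ℝ → ℝ) :
    ∃ mstar : ℕ, mstar ≤ min (s * d) c ∧ ∀ m : ℕ, mstar ≤ m →
      (⨅ W : (Fin m → (Fin s × Fin d → ℝ)) × (Fin m → (Fin c → ℝ)),
        (∑ i, L (∑ j, Matrix.vecMulVec (circM (X i) *ᵥ W.1 j) (W.2 j)) (Y i)) +
          (β / 2) * ∑ j, ((∑ r, (W.1 j r) ^ 2) + (∑ r, (W.2 j r) ^ 2)))
      =
      (⨅ Z : Matrix (Fin s × Fin d) (Fin c) ℝ,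
        (∑ i, L (circM (X i) * Z) (Y i)) + β * nuclearNorm Z) := by
  refine ⟨min (s * d) c, le_rfl, fun m hm => ?_⟩
  simp_rw [← dotProduct_self_eq_sum_sq, ← mul_sum_vecMulVec]
  apply Real.iInf_eq_iInf_of_forall_exists_le
  · rintro ⟨u, v⟩
    refine ⟨∑ j, vecMulVec (u j) (v j), ?_⟩
    have hreg := two_mul_nuclearNorm_le_sum_dotProduct_self _ u v rfl
    dsimp only
    nlinarith
  · intro Z
    obtain ⟨u, v, rfl, hcost⟩ :=
      exists_sum_vecMulVec_eq_of_min_card_le Z (δ := Fin m) (by simpa using hm)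
    refine ⟨(u, v), ?_⟩
    dsimp only
    nlinarith

/-- **Theorem 5 (linear-activation FNO).**
For `m ≥ m*` with `m* ≤ min {sd, c}`, the non-convex linear FNO training
problem (a global circular-convolution two-layer network) equals a convex
program with nuclear-norm regularization. -/
theorem linear_fno_convex_dual
    (n s d c : ℕ) (hn : 0 < n) (hs : 0 < s) (hd : 0 < d) (hc : 0 < c)
    (β : ℝ) (hβ : 0 < β)
    (X : Fin n → Matrix (Fin s) (Fin d) ℝ) (Y : Fin n → Matrix (Fin s) (Fin c) ℝ)
    (L : Matrix (Fin s) (Fin c) ℝ → Matrix (Fin s) (Fin c) ℝ → ℝ)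
    (hconv : ∀ Yi, ConvexOn ℝ Set.univ fun R => L R Yi)
    (hlsc : ∀ Yi, LowerSemicontinuous fun R => L R Yi) :
    ∃ mstar : ℕ, mstar ≤ min (s * d) c ∧ ∀ m : ℕ, mstar ≤ m →
      (⨅ W : (Fin m → (Fin s × Fin d → ℝ)) × (Fin m → (Fin c → ℝ)),
        (∑ i, L (∑ j, Matrix.vecMulVec (circM (X i) *ᵥ W.1 j) (W.2 j)) (Y i)) +
          (β / 2) * ∑ j, ((∑ r, (W.1 j r) ^ 2) + (∑ r, (W.2 j r) ^ 2)))
      =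
      (⨅ Z : Matrix (Fin s × Fin d) (Fin c) ℝ,
        (∑ i, L (circM (X i) * Z) (Y i)) + β * nuclearNorm Z) :=
  linear_fno_convex_dual_general n s d c β hβ X Y L
end
end
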